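/- arXiv:1110.4830 — 3 statements merged into one kernel-verified Lean document; each statement's English description precedes it below -/
import Mathlib

section
/- Let q ≥ 2 and l ≥ 1 be integers, and let m₀, m₁, m₂, m₃ be positive real numbers with 1 ≤ m₀, m₂, m₃ < q and 0 < m₁ < l⁻¹(6q)^(-l). Write t(x) = m₃x³ + m₂x² − m₁x + m₀ and let c₀, c₁, …, c_{3l} be the coefficients of the polynomial t(x)^l, so t(x)^l = Σ_{i=0}^{3l} c_i x^i. Then c_i > 0 for every i ∈ {0, 2, 3, …, 3l}, c₁ < 0, and |c_i| ≤ (4q)^l for every i with 0 ≤ i ≤ 3l. -/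
/-!
Write `t = s - m₁ X` with `s = m₃ X³ + m₂ X² + m₀`. Every index `0` or `2 ≤ i ≤ 3l` is a sum of
`l` elements of `{0, 2, 3}`, so the corresponding coefficient of `s^l` is at least `1`.
The perturbation is controlled by coefficientwise majorants, whose value at `1` bounds every
coefficient: `t^l - s^l = (t - s) · ∑ tᵏ s^(l-1-k)` is majorized by a polynomial whose value at
`1` is at most `l m₁ (4q)^(l-1) < 1`, and `t^l` is majorized by `(s + m₁ X)^l`, whose value at
`1` is at most `(4q)^l`. The coefficient of `x` in `t^l` is `l m₀^(l-1) (-m₁)`.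
-/

open Polynomial Finset

namespace Polynomial

theorem coeff_one_pow {R : Type*} [CommSemiring R] (p : R[X]) (n : ℕ) :
    (p ^ n).coeff 1 = n * p.coeff 1 * p.coeff 0 ^ (n - 1) := by
  rw [← coeff_coe, coe_pow, PowerSeries.coeff_one_pow, coeff_coe, constantCoeff_coe]

section OrderedSemiring

variable {R : Type*} [Semiring R] [PartialOrder R] [IsOrderedRing R] {p q : R[X]}

theorem coeff_le_eval_one (hp : ∀ i, 0 ≤ p.coeff i) (i : ℕ) : p.coeff i ≤ p.eval 1 := by
  rw [eval_eq_sum_range]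
  simp only [one_pow, mul_one]
  rcases le_or_gt i p.natDegree with h | h
  · exact single_le_sum (fun j _ => hp j) (mem_range.mpr (Nat.lt_succ_of_le h))
  · rw [coeff_eq_zero_of_natDegree_lt h]
    exact sum_nonneg fun j _ => hp j

theorem mul_coeff_le_coeff_mul (hp : ∀ i, 0 ≤ p.coeff i) (hq : ∀ i, 0 ≤ q.coeff i) (i j : ℕ) :
    p.coeff i * q.coeff j ≤ (p * q).coeff (i + j) := by
  rw [coeff_mul]
  exact single_le_sum (f := fun x => p.coeff x.1 * q.coeff x.2) (a := (i, j))
    (fun x _ => mul_nonneg (hp _) (hq _)) (mem_antidiagonal.mpr rfl)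

end OrderedSemiring

variable {R : Type*} [CommRing R] [LinearOrder R] [IsStrictOrderedRing R] {p q d P Q D : R[X]}

def AbsCoeffLE (p P : R[X]) : Prop := ∀ i, |p.coeff i| ≤ P.coeff i

theorem absCoeffLE_self (hp : ∀ i, 0 ≤ p.coeff i) : AbsCoeffLE p p :=
  fun i => (abs_of_nonneg (hp i)).le

namespace AbsCoeffLE

theorem coeff_nonneg (h : AbsCoeffLE p P) (i : ℕ) : 0 ≤ P.coeff i :=
  (abs_nonneg _).trans (h i)

theorem add (hp : AbsCoeffLE p P) (hq : AbsCoeffLE q Q) : AbsCoeffLE (p + q) (P + Q) := fun i => by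
  simpa only [coeff_add] using (abs_add_le _ _).trans (add_le_add (hp i) (hq i))

theorem sum {ι : Type*} (s : Finset ι) {p P : ι → R[X]} (h : ∀ k ∈ s, AbsCoeffLE (p k) (P k)) :
    AbsCoeffLE (∑ k ∈ s, p k) (∑ k ∈ s, P k) := fun i => by
  simp only [finsetSum_coeff]
  exact (abs_sum_le_sum_abs _ _).trans (sum_le_sum fun k hk => h k hk i)

theorem mul (hp : AbsCoeffLE p P) (hq : AbsCoeffLE q Q) : AbsCoeffLE (p * q) (P * Q) := fun n => by
  simp only [coeff_mul]
  refine (abs_sum_le_sum_abs _ _).trans (sum_le_sum fun x _ => ?_)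
  rw [abs_mul]
  exact mul_le_mul (hp _) (hq _) (abs_nonneg _) (hp.coeff_nonneg _)

theorem pow (hp : AbsCoeffLE p P) (n : ℕ) : AbsCoeffLE (p ^ n) (P ^ n) := by
  induction n with
  | zero => exact absCoeffLE_self fun i => by rw [pow_zero, coeff_one]; split_ifs <;> simp
  | succ n ih => simpa only [pow_succ] using ih.mul hp

theorem abs_coeff_le_eval_one (h : AbsCoeffLE p P) (i : ℕ) : |p.coeff i| ≤ P.eval 1 :=
  (h i).trans (coeff_le_eval_one h.coeff_nonneg i)

theorem eval_one_nonneg (h : AbsCoeffLE p P) : 0 ≤ P.eval 1 :=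
  (abs_nonneg _).trans (h.abs_coeff_le_eval_one 0)

theorem abs_coeff_add_pow_sub_pow_le (hq : AbsCoeffLE q Q) (hd : AbsCoeffLE d D) (n i : ℕ) :
    |((q + d) ^ n - q ^ n).coeff i| ≤ n * (Q + D).eval 1 ^ (n - 1) * D.eval 1 := by
  have hmaj : AbsCoeffLE ((q + d) ^ n - q ^ n)
      ((∑ k ∈ range n, (Q + D) ^ k * Q ^ (n - 1 - k)) * D) := by
    rw [← geom_sum₂_mul, add_sub_cancel_left]
    exact (AbsCoeffLE.sum _ fun k _ => ((hq.add hd).pow k).mul (hq.pow _)).mul hd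
  refine (hmaj.abs_coeff_le_eval_one i).trans ?_
  have hQ := hq.eval_one_nonneg
  have hD := hd.eval_one_nonneg
  have hterm : ∀ k ∈ range n, (Q.eval 1 + D.eval 1) ^ k * Q.eval 1 ^ (n - 1 - k) ≤
      (Q.eval 1 + D.eval 1) ^ (n - 1) := by
    intro k hk
    calc (Q.eval 1 + D.eval 1) ^ k * Q.eval 1 ^ (n - 1 - k)
        ≤ (Q.eval 1 + D.eval 1) ^ k * (Q.eval 1 + D.eval 1) ^ (n - 1 - k) := by
          gcongr
          linarith
      _ = (Q.eval 1 + D.eval 1) ^ (n - 1) := by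
          rw [← pow_add, Nat.add_sub_cancel' (by grind)]
  simp only [eval_mul, eval_finsetSum, eval_pow]
  rw [eval_add]
  gcongr
  simpa using sum_le_card_nsmul _ _ _ hterm

theorem abs_coeff_le_eval_one_pow (hp : AbsCoeffLE p P) (n i : ℕ) :
    |(p ^ n).coeff i| ≤ P.eval 1 ^ n := by
  simpa only [eval_pow] using (hp.pow n).abs_coeff_le_eval_one i

end AbsCoeffLE

theorem coeff_add_pow_pos {s : R[X]} (hs : ∀ i, 0 ≤ s.coeff i) (hd : AbsCoeffLE d D) {n i : ℕ}
    (hsmall : n * (s + D).eval 1 ^ (n - 1) * D.eval 1 < 1) (hi : 1 ≤ (s ^ n).coeff i) :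
    0 < ((s + d) ^ n).coeff i := by
  have hclose := (absCoeffLE_self hs).abs_coeff_add_pow_sub_pow_le hd n i
  rw [coeff_sub] at hclose
  linarith [(abs_le.mp hclose).1]

theorem one_le_coeff_pow {s : R[X]} (hs : ∀ i, 0 ≤ s.coeff i) (h₀ : 1 ≤ s.coeff 0)
    (h₂ : 1 ≤ s.coeff 2) (h₃ : 1 ≤ s.coeff 3) {n i : ℕ} (hi : i = 0 ∨ 2 ≤ i ∧ i ≤ 3 * n) :
    1 ≤ (s ^ n).coeff i := by
  induction n generalizing i with
  | zero =>
    obtain rfl : i = 0 := by omega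
    simp
  | succ n ih =>
    obtain ⟨j, a, rfl, hj, ha⟩ :
        ∃ j a, i = j + a ∧ (j = 0 ∨ 2 ≤ j ∧ j ≤ 3 * n) ∧ 1 ≤ s.coeff a := by
      by_cases hi₀ : i = 0 ∨ 2 ≤ i ∧ i ≤ 3 * n
      · exact ⟨i, 0, rfl, hi₀, h₀⟩
      by_cases hi₃ : i = 3 * n + 3
      · exact ⟨3 * n, 3, hi₃, by omega, h₃⟩
      · exact ⟨i - 2, 2, by omega, by omega, h₂⟩
    rw [pow_succ]
    exact (one_le_mul_of_one_le_of_one_le (ih hj) ha).trans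
      (mul_coeff_le_coeff_mul ((absCoeffLE_self hs).pow n).coeff_nonneg hs j a)

end Polynomial

theorem nat_mul_pow_pred_mul_lt_one {l : ℕ} {a b m : ℝ} (hl : 0 < l) (ha : 0 ≤ a) (hab : a ≤ b)
    (hb : 1 ≤ b) (hm : 0 ≤ m) (hm' : m < (l : ℝ)⁻¹ * (b ^ l)⁻¹) :
    l * a ^ (l - 1) * m < 1 := by
  have hlb : 0 < l * b ^ l := by positivity
  calc l * a ^ (l - 1) * m ≤ l * b ^ l * m := by
        gcongr
        exact (pow_le_pow_left₀ ha hab _).trans (pow_le_pow_right₀ hb (Nat.sub_le l 1))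
    _ < 1 := (lt_inv_mul_iff₀ hlb).mp (by rwa [mul_one, mul_inv])

theorem technical_lemma_coefficients_general
    (q l : ℕ) (hl : 1 ≤ l)
    (m₀ m₁ m₂ m₃ : ℝ)
    (hm₀ : 1 ≤ m₀) (hm₀' : m₀ < q)
    (hm₂ : 1 ≤ m₂) (hm₂' : m₂ < q)
    (hm₃ : 1 ≤ m₃) (hm₃' : m₃ < q)
    (hm₁ : 0 < m₁) (hm₁' : m₁ < (l : ℝ)⁻¹ * ((6 * q : ℝ) ^ l)⁻¹)
    (t : Polynomial ℝ)
    (ht : t = C m₃ * X ^ 3 + C m₂ * X ^ 2 - C m₁ * X + C m₀) :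
    0 < (t ^ l).coeff 0 ∧
    (∀ i : ℕ, 2 ≤ i → i ≤ 3 * l → 0 < (t ^ l).coeff i) ∧
    (t ^ l).coeff 1 < 0 ∧
    (∀ i : ℕ, i ≤ 3 * l → |(t ^ l).coeff i| ≤ (4 * q : ℝ) ^ l) := by
  set s : ℝ[X] := C m₃ * X ^ 3 + C m₂ * X ^ 2 + C m₀
  have hts : t = s + C (-m₁) * X := by rw [ht, C_neg]; ring
  have hs : ∀ i, 0 ≤ s.coeff i := fun i => by
    simp only [s, coeff_add, coeff_C_mul, coeff_X_pow, coeff_C]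
    split_ifs <;> linarith
  have hs₀ : s.coeff 0 = m₀ := by simp [s]
  have hs₂ : s.coeff 2 = m₂ := by simp [s]
  have hs₃ : s.coeff 3 = m₃ := by simp [s]
  have hd : AbsCoeffLE (C (-m₁) * X) (C m₁ * X) := fun i => by
    simp only [coeff_C_mul_X]
    split_ifs <;> simp [abs_of_pos hm₁]
  have hm₁_le : m₁ ≤ 1 := hm₁'.le.trans <|
    mul_le_one₀ (inv_le_one_of_one_le₀ (by exact_mod_cast hl)) (by positivity)
      (inv_le_one_of_one_le₀ (one_le_pow₀ (by linarith)))
  have heval : (s + C m₁ * X).eval 1 ≤ 4 * (q : ℝ) := by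
    simp only [s, eval_add, eval_mul, eval_C, eval_pow, eval_X, one_pow, mul_one]
    linarith
  have hsmall : (l : ℝ) * (s + C m₁ * X).eval 1 ^ (l - 1) * (C m₁ * X).eval 1 < 1 := by
    rw [eval_mul, eval_C, eval_X, mul_one]
    exact nat_mul_pow_pred_mul_lt_one hl ((absCoeffLE_self hs).add hd).eval_one_nonneg
      (by linarith) (by linarith)
      hm₁.le hm₁'
  have hpos : ∀ i, (i = 0 ∨ 2 ≤ i ∧ i ≤ 3 * l) → 0 < (t ^ l).coeff i := fun i hi =>
    hts ▸ coeff_add_pow_pos hs hd hsmall <|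
      one_le_coeff_pow hs (hs₀ ▸ hm₀) (hs₂ ▸ hm₂) (hs₃ ▸ hm₃) hi
  refine ⟨hpos 0 (Or.inl rfl), fun i h₂ h₃ => hpos i (Or.inr ⟨h₂, h₃⟩), ?_, fun i _ => ?_⟩
  · have h₀ : t.coeff 0 = m₀ := by simp [ht]
    have h₁ : t.coeff 1 = -m₁ := by simp [ht]
    rw [coeff_one_pow, h₀, h₁, mul_neg, neg_mul]
    exact neg_neg_of_pos (mul_pos (mul_pos (by exact_mod_cast hl) hm₁) (pow_pos (by linarith) _))
  · calc |(t ^ l).coeff i| ≤ (s + C m₁ * X).eval 1 ^ l :=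
          hts ▸ ((absCoeffLE_self hs).add hd).abs_coeff_le_eval_one_pow l i
      _ ≤ (4 * q : ℝ) ^ l := by
          gcongr
          exact (absCoeffLE_self hs).add hd |>.eval_one_nonneg

theorem technical_lemma_coefficients
    (q l : ℕ) (hq : 2 ≤ q) (hl : 1 ≤ l)
    (m₀ m₁ m₂ m₃ : ℝ)
    (hm₀ : 1 ≤ m₀) (hm₀' : m₀ < q)
    (hm₂ : 1 ≤ m₂) (hm₂' : m₂ < q)
    (hm₃ : 1 ≤ m₃) (hm₃' : m₃ < q)
    (hm₁ : 0 < m₁) (hm₁' : m₁ < (l : ℝ)⁻¹ * ((6 * q : ℝ) ^ l)⁻¹)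
    (t : Polynomial ℝ)
    (ht : t = C m₃ * X ^ 3 + C m₂ * X ^ 2 - C m₁ * X + C m₀) :
    0 < (t ^ l).coeff 0 ∧
    (∀ i : ℕ, 2 ≤ i → i ≤ 3 * l → 0 < (t ^ l).coeff i) ∧
    (t ^ l).coeff 1 < 0 ∧
    (∀ i : ℕ, i ≤ 3 * l → |(t ^ l).coeff i| ≤ (4 * q : ℝ) ^ l) :=
  technical_lemma_coefficients_general q l hl m₀ m₁ m₂ m₃ hm₀ hm₀' hm₂ hm₂' hm₃ hm₃' hm₁ hm₁' t ht
end

section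
/- Let q ≥ 2 be an integer, let a ≥ 1 and k ≥ 1 be integers, and let b be an integer with 1 ≤ b < q^k. Then s_q(a·q^k − b) = s_q(a − 1) + k(q − 1) − s_q(b − 1). -/
/-- `digitSum q n` is the sum of digits of `n` in base `q`. -/
def digitSum (q n : ℕ) : ℕ := (Nat.digits q n).sum

lemma digitSum_rec {q : ℕ} (hq : 2 ≤ q) (n : ℕ) :
    digitSum q n = n % q + digitSum q (n / q) := by
  rcases Nat.eq_zero_or_pos n with rfl | hn
  · simp [digitSum]
  · unfold digitSum
    rw [Nat.digits_def' (by omega : 1 < q) hn]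
    simp

lemma digitSum_split {q : ℕ} (hq : 2 ≤ q) :
    ∀ (k n c : ℕ), n < q ^ k →
      digitSum q (n + q ^ k * c) = digitSum q n + digitSum q c := by
  intro k
  induction k with
  | zero =>
    intro n c hn
    have : n = 0 := by simpa using hn
    subst this; simp [digitSum]
  | succ k ih =>
    intro n c hn
    rw [digitSum_rec hq (n + q ^ (k + 1) * c), digitSum_rec hq n]
    have h1 : n + q ^ (k + 1) * c = n + q * (q ^ k * c) := by ring
    have h2 : (n + q ^ (k + 1) * c) % q = n % q := by
      rw [h1, Nat.add_mul_mod_self_left]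
    have h3 : (n + q ^ (k + 1) * c) / q = n / q + q ^ k * c := by
      rw [h1, Nat.add_mul_div_left _ _ (by omega : 0 < q)]
    have h4 : n / q < q ^ k := by
      rw [Nat.div_lt_iff_lt_mul (by omega : 0 < q)]
      calc n < q ^ (k + 1) := hn
        _ = q ^ k * q := by ring
    rw [h2, h3, ih _ _ h4]
    omega

lemma digitSum_compl {q : ℕ} (hq : 2 ≤ q) :
    ∀ (k m : ℕ), m < q ^ k →
      digitSum q (q ^ k - 1 - m) + digitSum q m = k * (q - 1) := by
  intro k
  induction k with
  | zero =>
    intro m hm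
    have : m = 0 := by simpa using hm
    subst this; simp [digitSum]
  | succ k ih =>
    intro m hm
    set r := m % q with hr
    set d := m / q with hd
    have hrq : r < q := Nat.mod_lt _ (by omega)
    have hdm : q * d + r = m := Nat.div_add_mod m q
    have hdk : d < q ^ k := by
      rw [hd, Nat.div_lt_iff_lt_mul (by omega : 0 < q)]
      calc m < q ^ (k + 1) := hm
        _ = q ^ k * q := by ring
    have hkey : q ^ (k + 1) - 1 - m = (q - 1 - r) + q * (q ^ k - 1 - d) := by
      have hP : 1 ≤ q ^ k := Nat.one_le_pow _ _ (by omega)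
      have hPP : q ^ (k + 1) = q * q ^ k := by ring
      have h1 : (1:ℕ) ≤ q ^ (k + 1) := Nat.one_le_pow _ _ (by omega)
      have hdm' : (q : ℤ) * d + r = m := by exact_mod_cast hdm
      have hPP' : ((q : ℤ)) ^ (k + 1) = q * q ^ k := by ring
      zify [Nat.le_sub_one_of_lt hdk, Nat.le_sub_one_of_lt hm, hP, h1,
        (by omega : 1 ≤ q), (by omega : r ≤ q - 1)]
      push_cast
      linarith [hdm', hPP']
    have hmod : ((q - 1 - r) + q * (q ^ k - 1 - d)) % q = q - 1 - r := by
      rw [Nat.add_mul_mod_self_left, Nat.mod_eq_of_lt (by omega)]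
    have hdiv : ((q - 1 - r) + q * (q ^ k - 1 - d)) / q = q ^ k - 1 - d := by
      rw [Nat.add_mul_div_left _ _ (by omega : 0 < q), Nat.div_eq_of_lt (by omega)]
      omega
    rw [hkey, digitSum_rec hq, hmod, hdiv, digitSum_rec hq m, ← hr, ← hd]
    have hIH := ih d hdk
    set K := k * (q - 1) with hK
    have : (k + 1) * (q - 1) = K + (q - 1) := by rw [hK]; ring
    omega

theorem digitSum_split_sub
    (q a b k : ℕ) (hq : 2 ≤ q) (ha : 1 ≤ a) (hk : 1 ≤ k)
    (hb : 1 ≤ b) (hb' : b < q ^ k) :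
    (digitSum q (a * q ^ k - b) : ℤ) =
      digitSum q (a - 1) + k * (q - 1) - digitSum q (b - 1) := by
  have hP : 1 ≤ q ^ k := Nat.one_le_pow _ _ (by omega)
  have hmulsub : q ^ k * a = q ^ k * (a - 1) + q ^ k := by
    cases a with
    | zero => omega
    | succ n => simp [Nat.mul_succ]
  have hsplit : a * q ^ k - b = (q ^ k - b) + q ^ k * (a - 1) := by
    have : a * q ^ k = q ^ k * a := by ring
    omega
  have h1 : digitSum q ((q ^ k - b) + q ^ k * (a - 1)) =
      digitSum q (q ^ k - b) + digitSum q (a - 1) :=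
    digitSum_split hq k _ _ (by omega)
  have h2 : q ^ k - b = q ^ k - 1 - (b - 1) := by omega
  have h3 := digitSum_compl hq k (b - 1) (by omega)
  rw [hsplit, h1, h2]
  zify at h3
  rw [Nat.cast_sub (by omega : 1 ≤ q)] at h3
  push_cast at h3 ⊢
  linarith
end

section
/- Let q ≥ 2, h ≥ 1 and u ≥ 1 be integers, and let p(x) = a_h x^h + ⋯ + a_0 be an integer polynomial of degree h all of whose coefficients a_0, …, a_h are positive. Let m₀, m₁, m₂, m₃ be integers with q^(u-1) ≤ m₀, m₂, m₃ < q^u and 1 ≤ m₁ < q^u/(hq(6q)^h), and write t(x) = m₃x³ + m₂x² − m₁x + m₀. Then in the polynomial p(t(x)) the coefficient of x^1 is negative and all other coefficients (of x^0, x^2, x^3, …, x^(3h)) are positive. -/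
/-!
Write `t = s - m₁ X` with `s = m₃ X³ + m₂ X² + m₀`. The coefficients of `s` in degrees 0, 2, 3 are
at least `r = q^(u-1)`, so those of `s^k` in degrees `0, 2, …, 3k` are at least `r^k`. Since
`t^k - s^k = (∑ t^j s^(k-1-j)) (t - s)`, its coefficients are dominated by those of the majorant
`k e^(k-1) m₁ X` with `e = s + m₁ X`, hence bounded by `k e(1)^(k-1) m₁`; as `e(1) < 4 q^u` and
`k ≤ h`, the bound on `m₁` makes this `< r^k`. So `t^k` keeps positive coefficients in those
degrees, and so does `p(t)`. The coefficient of `x` in `p(t)` is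
`p'(m₀) · (-m₁) < 0` by the chain rule.
-/

open Finset

namespace Polynomial

section CommSemiring

variable {R : Type*} [CommSemiring R]

theorem coeff_one_comp (p t : R[X]) :
    (p.comp t).coeff 1 = t.coeff 1 * p.derivative.eval (t.coeff 0) := by
  have := congrArg (fun f => f.eval 0) (derivative_comp p t)
  simpa [← coeff_zero_eq_eval_zero, coeff_derivative, eval_comp] using this

theorem coeff_comp_eq_sum (p t : R[X]) (i : ℕ) :
    (p.comp t).coeff i = ∑ k ∈ range (p.natDegree + 1), p.coeff k * (t ^ k).coeff i := by
  simp only [comp, eval₂_eq_sum_range, finsetSum_coeff, coeff_C_mul]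

end CommSemiring

section OrderedRing

variable {R : Type*} [CommRing R] [LinearOrder R] [IsStrictOrderedRing R]

def Majorizes (Q P : R[X]) : Prop := ∀ i, |P.coeff i| ≤ Q.coeff i

namespace Majorizes

variable {P P' Q Q' : R[X]}

theorem coeff_nonneg (h : Majorizes Q P) (i : ℕ) : 0 ≤ Q.coeff i :=
  (abs_nonneg _).trans (h i)

theorem of_coeff_nonneg (h : ∀ i, 0 ≤ P.coeff i) : Majorizes P P :=
  fun i => (abs_of_nonneg (h i)).le

theorem add (h : Majorizes Q P) (h' : Majorizes Q' P') : Majorizes (Q + Q') (P + P') := fun i => by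
  simpa only [coeff_add] using (abs_add_le _ _).trans (add_le_add (h i) (h' i))

theorem mul (h : Majorizes Q P) (h' : Majorizes Q' P') : Majorizes (Q * Q') (P * P') := fun i => by
  rw [coeff_mul, coeff_mul]
  refine (abs_sum_le_sum_abs _ _).trans (sum_le_sum fun x _ => ?_)
  rw [abs_mul]
  exact mul_le_mul (h _) (h' _) (abs_nonneg _) (h.coeff_nonneg _)

theorem pow (h : Majorizes Q P) (k : ℕ) : Majorizes (Q ^ k) (P ^ k) := by
  induction k with
  | zero => simpa using of_coeff_nonneg fun i => by rw [coeff_one]; split_ifs <;> simp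
  | succ k ih => simpa only [pow_succ] using ih.mul h

theorem sum {ι : Type*} {s : Finset ι} {Q P : ι → R[X]} (h : ∀ j ∈ s, Majorizes (Q j) (P j)) :
    Majorizes (∑ j ∈ s, Q j) (∑ j ∈ s, P j) := fun i => by
  simp only [finsetSum_coeff]
  exact (abs_sum_le_sum_abs _ _).trans (sum_le_sum fun j hj => h j hj i)

theorem C_abs_mul_X (c : R) : Majorizes (C |c| * X) (C c * X) := fun i => by
  simp only [coeff_C_mul_X]; split_ifs <;> simp

end Majorizes

theorem coeff_le_eval_one_s11 {P : R[X]} (h : ∀ i, 0 ≤ P.coeff i) (i : ℕ) : P.coeff i ≤ P.eval 1 := by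
  rw [eval_eq_sum_range]
  rcases le_or_gt i P.natDegree with hi | hi
  · simpa using single_le_sum (f := fun j => P.coeff j * 1 ^ j) (fun j _ => by simpa using h j)
      (mem_range.2 (Nat.lt_succ_of_le hi))
  · simpa [coeff_eq_zero_of_natDegree_lt hi] using sum_nonneg fun j _ => h j

theorem abs_coeff_pow_sub_pow_le {E D P Q : R[X]} (hP : Majorizes E P) (hQ : Majorizes E Q)
    (hD : Majorizes D (P - Q)) (k i : ℕ) :
    |(P ^ k - Q ^ k).coeff i| ≤ k * E.eval 1 ^ (k - 1) * D.eval 1 := by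
  have h : Majorizes ((k : R[X]) * E ^ (k - 1) * D) (P ^ k - Q ^ k) := by
    rw [← geom_sum₂_mul, ← geom_sum₂_self]
    exact (Majorizes.sum fun j _ => (hP.pow j).mul (hQ.pow _)).mul hD
  calc |(P ^ k - Q ^ k).coeff i| ≤ ((k : R[X]) * E ^ (k - 1) * D).coeff i := h i
    _ ≤ ((k : R[X]) * E ^ (k - 1) * D).eval 1 := coeff_le_eval_one_s11 h.coeff_nonneg i
    _ = k * E.eval 1 ^ (k - 1) * D.eval 1 := by simp

theorem mul_coeff_le_coeff_mul_s11 {P Q : R[X]} (hP : ∀ i, 0 ≤ P.coeff i) (hQ : ∀ i, 0 ≤ Q.coeff i)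
    (a b : ℕ) : P.coeff a * Q.coeff b ≤ (P * Q).coeff (a + b) := by
  rw [coeff_mul]
  exact single_le_sum (f := fun x => P.coeff x.1 * Q.coeff x.2)
    (fun x _ => mul_nonneg (hP _) (hQ _)) (a := (a, b)) (mem_antidiagonal.2 rfl)

theorem eval_pos_of_coeff_nonneg {P : R[X]} (h : ∀ i, 0 ≤ P.coeff i) (h0 : 0 < P.coeff 0) {x : R}
    (hx : 0 ≤ x) : 0 < P.eval x := by
  rw [eval_eq_sum_range]
  exact sum_pos' (fun i _ => mul_nonneg (h i) (pow_nonneg hx i))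
    ⟨0, mem_range.2 (Nat.succ_pos _), by simpa using h0⟩

theorem coeff_comp_pos {p t : R[X]} {i : ℕ} (hp : ∀ k, 0 ≤ p.coeff k) (hlead : 0 < p.leadingCoeff)
    (ht : ∀ k ≤ p.natDegree, 0 ≤ (t ^ k).coeff i) (htn : 0 < (t ^ p.natDegree).coeff i) :
    0 < (p.comp t).coeff i := by
  rw [coeff_comp_eq_sum]
  exact sum_pos' (fun k hk => mul_nonneg (hp k) (ht k (Nat.lt_succ_iff.1 (mem_range.1 hk))))
    ⟨p.natDegree, self_mem_range_succ _, mul_pos hlead htn⟩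

theorem pow_le_coeff_pow {s : R[X]} {r : R} (hs : ∀ i, 0 ≤ s.coeff i) (hr : 0 ≤ r)
    (h0 : r ≤ s.coeff 0) (h2 : r ≤ s.coeff 2) (h3 : r ≤ s.coeff 3) {k : ℕ} (hk : 1 ≤ k) {i : ℕ}
    (hi : i = 0 ∨ 2 ≤ i ∧ i ≤ 3 * k) : r ^ k ≤ (s ^ k).coeff i := by
  induction k, hk using Nat.le_induction generalizing i with
  | base =>
    rw [pow_one, pow_one]
    obtain rfl | ⟨hi2, hi3⟩ := hi
    · exact h0
    · interval_cases i <;> assumption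
  | succ k hk ih =>
    have step : ∀ a b, a + b = i → (a = 0 ∨ 2 ≤ a ∧ a ≤ 3 * k) → r ≤ s.coeff b →
        r ^ (k + 1) ≤ (s ^ (k + 1)).coeff i := fun a b hab ha hb => by
      rw [pow_succ, pow_succ, ← hab]
      exact (mul_le_mul (ih ha) hb hr ((pow_nonneg hr k).trans (ih ha))).trans
        (mul_coeff_le_coeff_mul_s11 ((Majorizes.of_coeff_nonneg hs).pow k).coeff_nonneg hs a b)
    obtain rfl | ⟨hi2, hi3⟩ := hi
    · exact step 0 0 rfl (.inl rfl) h0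
    · by_cases hik : i ≤ 3 * k
      · exact step i 0 (add_zero i) (.inr ⟨hi2, hik⟩) h0
      · by_cases hik' : i ≤ 3 * k + 2
        · exact step (i - 2) 2 (by omega) (.inr ⟨by omega, by omega⟩) h2
        · exact step (i - 3) 3 (by omega) (.inr ⟨by omega, by omega⟩) h3

theorem coeff_add_C_mul_X_pow_pos {s : R[X]} {r c : R} (hs : ∀ i, 0 ≤ s.coeff i) (hr : 0 ≤ r)
    (h0 : r ≤ s.coeff 0) (h2 : r ≤ s.coeff 2) (h3 : r ≤ s.coeff 3) {k : ℕ} (hk : 1 ≤ k)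
    (hsmall : k * (s.eval 1 + |c|) ^ (k - 1) * |c| < r ^ k) {i : ℕ}
    (hi : i = 0 ∨ 2 ≤ i ∧ i ≤ 3 * k) : 0 < ((s + C c * X) ^ k).coeff i := by
  have hsE : Majorizes (s + C |c| * X) s := fun i => by
    rw [abs_of_nonneg (hs i), coeff_add]
    exact le_add_of_nonneg_right ((Majorizes.C_abs_mul_X c).coeff_nonneg i)
  have hdiff := abs_coeff_pow_sub_pow_le
    ((Majorizes.of_coeff_nonneg hs).add (Majorizes.C_abs_mul_X c)) hsE
    (by simpa using Majorizes.C_abs_mul_X c) k i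
  simp only [eval_add, eval_mul, eval_C, eval_X, mul_one] at hdiff
  have hlow := pow_le_coeff_pow hs hr h0 h2 h3 hk hi
  rw [coeff_sub] at hdiff
  linarith [(abs_le.1 hdiff).1]

theorem coeff_cubic_pow_pos {a b c d r : R} (hr : 0 ≤ r) (ha : r ≤ a) (hb : r ≤ b) (hd : r ≤ d)
    {k : ℕ} (hk : 1 ≤ k) (hsmall : k * (a + b + |c| + d) ^ (k - 1) * |c| < r ^ k) {i : ℕ}
    (hi : i = 0 ∨ 2 ≤ i ∧ i ≤ 3 * k) :
    0 < ((C a * X ^ 3 + C b * X ^ 2 + C c * X + C d) ^ k).coeff i := by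
  have hs : ∀ i, 0 ≤ (C a * X ^ 3 + C b * X ^ 2 + C d).coeff i := fun i => by
    simp only [coeff_add, coeff_C_mul_X_pow, coeff_C]
    split_ifs <;> linarith
  rw [add_right_comm]
  refine coeff_add_C_mul_X_pow_pos hs hr (by simpa) (by simpa) (by simpa) hk ?_ hi
  convert hsmall using 3
  simp only [eval_add, eval_mul, eval_C, eval_pow, eval_X, one_pow, mul_one]
  ring

theorem coeff_cubic_pow_nonneg {a b c d r : R} (hr : 0 ≤ r) (ha : r ≤ a) (hb : r ≤ b) (hd : r ≤ d)
    {k : ℕ} (hsmall : k * (a + b + |c| + d) ^ (k - 1) * |c| < r ^ k) {i : ℕ} (hi : i ≠ 1) :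
    0 ≤ ((C a * X ^ 3 + C b * X ^ 2 + C c * X + C d) ^ k).coeff i := by
  obtain rfl | hk := Nat.eq_zero_or_pos k
  · simp only [pow_zero, coeff_one]
    split_ifs <;> norm_num
  by_cases hik : i ≤ 3 * k
  · exact (coeff_cubic_pow_pos hr ha hb hd hk hsmall (by omega)).le
  · rw [coeff_eq_zero_of_natDegree_lt ((natDegree_pow_le_of_le k natDegree_cubic_le).trans_lt
      (by omega))]

end OrderedRing

end Polynomial

theorem natCast_mul_pow_pred_mul_lt_pow {R : Type*} [CommRing R] [LinearOrder R]
    [IsStrictOrderedRing R] {q x m r : R} {h k : ℕ} (hq : 1 ≤ q) (hkh : k ≤ h)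
    (hx0 : 0 ≤ x) (hx : x ≤ 4 * q * r) (hm : 0 ≤ m) (hsmall : h * (6 * q) ^ h * m < r) :
    k * x ^ (k - 1) * m < r ^ k := by
  obtain rfl | hk := Nat.eq_zero_or_pos k
  · simp
  have hq0 : 0 ≤ q := zero_le_one.trans hq
  have hr : 0 < r := lt_of_le_of_lt (by positivity) hsmall
  have h4q : (4 * q) ^ (k - 1) ≤ (6 * q) ^ h := calc
    (4 * q) ^ (k - 1) ≤ (6 * q) ^ (k - 1) := by gcongr; norm_num
    _ ≤ (6 * q) ^ h := pow_le_pow_right₀ (by linarith) (by omega)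
  calc (k : R) * x ^ (k - 1) * m ≤ h * (4 * q * r) ^ (k - 1) * m := by
        gcongr
    _ = h * (4 * q) ^ (k - 1) * m * r ^ (k - 1) := by rw [mul_pow]; ring
    _ ≤ h * (6 * q) ^ h * m * r ^ (k - 1) := by gcongr
    _ < r * r ^ (k - 1) := by gcongr
    _ = r ^ k := by rw [← pow_succ', Nat.sub_add_cancel hk]

theorem intCast_mul_lt_pow_pred_of_lt_div {q h u : ℕ} {m : ℤ} (hq : 0 < q) (hh : 0 < h)
    (hu : 1 ≤ u) (hm : (m : ℝ) < (q : ℝ) ^ u / ((h : ℝ) * q * (6 * q : ℝ) ^ h)) :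
    (h : ℤ) * (6 * q) ^ h * m < q ^ (u - 1) := by
  have hq0 : (0 : ℝ) < q := by exact_mod_cast hq
  have hh0 : (0 : ℝ) < h := by exact_mod_cast hh
  rw [lt_div_iff₀ (by positivity), ← Nat.sub_add_cancel hu, pow_succ] at hm
  have : ((h : ℤ) * (6 * q) ^ h * m) * q < q ^ (u - 1) * q := by
    exact_mod_cast (by linarith : ((h : ℝ) * (6 * q) ^ h * m) * q < q ^ (u - 1) * q)
  exact lt_of_mul_lt_mul_right this (by positivity)

open Polynomial

theorem coefficients_of_p_comp_t
    (q h u : ℕ) (hq : 2 ≤ q) (hh : 1 ≤ h) (hu : 1 ≤ u)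
    (p : Polynomial ℤ) (hdeg : p.natDegree = h)
    (hcoeff : ∀ i : ℕ, i ≤ h → 0 < p.coeff i)
    (m₀ m₁ m₂ m₃ : ℤ)
    (hm₀ : (q : ℤ) ^ (u - 1) ≤ m₀) (hm₀' : m₀ < (q : ℤ) ^ u)
    (hm₂ : (q : ℤ) ^ (u - 1) ≤ m₂) (hm₂' : m₂ < (q : ℤ) ^ u)
    (hm₃ : (q : ℤ) ^ (u - 1) ≤ m₃) (hm₃' : m₃ < (q : ℤ) ^ u)
    (hm₁ : 1 ≤ m₁)
    (hm₁' : (m₁ : ℝ) < (q : ℝ) ^ u / ((h : ℝ) * q * (6 * q : ℝ) ^ h))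
    (t : Polynomial ℤ)
    (ht : t = C m₃ * X ^ 3 + C m₂ * X ^ 2 - C m₁ * X + C m₀) :
    (p.comp t).coeff 1 < 0 ∧
    (∀ i : ℕ, i = 0 ∨ (2 ≤ i ∧ i ≤ 3 * h) → 0 < (p.comp t).coeff i) := by
  have hr : (0 : ℤ) ≤ q ^ (u - 1) := by positivity
  have hsmall := intCast_mul_lt_pow_pred_of_lt_div (by omega) hh hu hm₁'
  have hm₁r : m₁ < q ^ (u - 1) := (le_mul_of_one_le_left (by omega)
    (one_le_mul_of_one_le_of_one_le (by exact_mod_cast hh) (one_le_pow₀ (by omega)))).trans_lt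
      hsmall
  have hqu : (q : ℤ) ^ u = q * q ^ (u - 1) := by rw [← pow_succ', Nat.sub_add_cancel hu]
  have hrq : (q : ℤ) ^ (u - 1) ≤ q * q ^ (u - 1) := le_mul_of_one_le_left hr (by omega)
  have hbound : ∀ k ≤ h, k * (m₃ + m₂ + |-m₁| + m₀) ^ (k - 1) * |-m₁| < (q ^ (u - 1) : ℤ) ^ k :=
    fun k hk => by
      rw [abs_neg, abs_of_pos (by omega)]
      exact natCast_mul_pow_pred_mul_lt_pow (by omega) hk (by omega) (by linarith) (by omega) hsmall
  have hp : ∀ i, 0 ≤ p.coeff i := fun i => by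
    rcases le_or_gt i h with hi | hi
    · exact (hcoeff i hi).le
    · rw [coeff_eq_zero_of_natDegree_lt (hdeg ▸ hi)]
  rw [ht, sub_eq_add_neg, ← neg_mul, ← map_neg]
  subst hdeg
  refine ⟨?_, ?_⟩
  · have hp' : ∀ i, 0 ≤ p.derivative.coeff i := fun i => by
      rw [coeff_derivative]; exact mul_nonneg (hp _) (by positivity)
    have hp'0 : 0 < p.derivative.coeff 0 := by simpa [coeff_derivative] using hcoeff 1 hh
    rw [coeff_one_comp]
    simp only [coeff_add, coeff_C_mul_X_pow, coeff_C_mul_X, coeff_C]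
    simpa using mul_neg_of_neg_of_pos (neg_neg_of_pos (by omega : 0 < m₁))
      (eval_pos_of_coeff_nonneg hp' hp'0 (by omega : 0 ≤ m₀))
  · rintro i (rfl | ⟨hi2, hi3⟩)
    · rw [coeff_zero_eq_eval_zero, eval_comp]
      simpa using eval_pos_of_coeff_nonneg hp (hcoeff 0 (Nat.zero_le _)) (by omega : 0 ≤ m₀)
    · exact coeff_comp_pos hp (hcoeff _ le_rfl)
        (fun k hk => coeff_cubic_pow_nonneg hr hm₃ hm₂ hm₀ (hbound k hk) (by omega))
        (coeff_cubic_pow_pos hr hm₃ hm₂ hm₀ hh (hbound _ le_rfl) (.inr ⟨hi2, hi3⟩))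
end
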